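/- W(6,3) > 180; that is, there exists a coloring c : {1,…,180} → {1,2,3,4,5,6} containing no monochromatic arithmetic progression of length 3. -/
import Mathlib


/-- `c` (viewed as a coloring of `{1,…,m}`) contains a monochromatic arithmetic
progression of length `l`: there are positive `a`, `d` with `a + (l-1)d ≤ m`
and `c (a) = c (a+d) = … = c (a+(l-1)d)`. -/
def ContainsAP (l m : ℕ) (c : ℕ → ℕ) : Prop :=
  ∃ a d : ℕ, 0 < a ∧ 0 < d ∧ a + (l - 1) * d ≤ m ∧
    ∀ j : ℕ, j ≤ l - 1 → c (a + j * d) = c a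

/-- `c` is a coloring of `{1,…,m}` with colors in `{1,…,k}`. -/
def IsColoring (k m : ℕ) (c : ℕ → ℕ) : Prop :=
  ∀ i : ℕ, 1 ≤ i → i ≤ m → 1 ≤ c i ∧ c i ≤ k

/-- The van der Waerden number `W k l`: the least positive `m` such that every
coloring of `{1,…,m}` with `k` colors contains a monochromatic arithmetic
progression of length `l`. -/
noncomputable def vdW (k l : ℕ) : ℕ :=
  sInf {m : ℕ | 0 < m ∧ ∀ c : ℕ → ℕ, IsColoring k m c → ContainsAP l m c}

set_option maxRecDepth 10000 in
def mycList : List ℕ := [1, 3, 4, 5, 2, 6, 5, 1, 1, 4, 2, 2, 1, 1, 5, 3, 5, 3, 3, 6, 2, 4, 1, 4, 3, 3, 4, 3, 3, 1, 4, 5, 5, 1, 6, 5, 4, 5, 4, 2, 3, 4, 6, 6, 2, 3, 2, 6, 3, 5, 2, 5, 2, 6, 3, 5, 6, 5, 3, 3, 1, 6, 5, 1, 2, 1, 2, 3, 4, 2, 2, 1, 4, 6, 6, 1, 6, 6, 1, 4, 1, 5, 3, 6, 6, 2, 6, 2, 4, 4, 5, 5, 1, 4, 4, 2, 3, 5, 2,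 1, 6, 4, 1, 1, 3, 4, 5, 2, 6, 5, 1, 1, 4, 2, 2, 1, 1, 5, 3, 5, 3, 3, 6, 2, 4, 1, 4, 3, 3, 4, 3, 3, 1, 4, 5, 5, 1, 6, 5, 4, 5, 4, 2, 3, 4, 6, 6, 2, 3, 2, 6, 3, 5, 2, 5, 2, 6, 3, 5, 6, 5, 3, 3, 1, 6, 5, 1, 2, 1, 2, 3, 4, 2, 2, 1, 4, 6, 6, 1, 6]

/-- An explicit 6-coloring of `{1,…,180}` (from the discrete-log-mod-6 coloring
for the prime 103) with no monochromatic 3-term AP. -/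
def myc : ℕ → ℕ := fun n => mycList.getD (n - 1) 0

set_option maxRecDepth 10000 in
theorem myc_coloring : ∀ i, i < 181 → (1 ≤ myc i ∧ myc i ≤ 6) := by decide

set_option maxRecDepth 10000 in
theorem myc_noAP : ∀ a, a < 181 → ∀ d, d < 91 →
    a = 0 ∨ d = 0 ∨ 180 < a + 2 * d ∨ ¬(myc (a + d) = myc a ∧ myc (a + 2 * d) = myc a) := by
  decide

theorem myc_isColoring : IsColoring 6 180 myc := fun i h1 h2 =>
  myc_coloring i (by omega)

theorem myc_notContainsAP : ¬ ContainsAP 3 180 myc := by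
  rintro ⟨a, d, ha, hd, hle, hj⟩
  have h1 := hj 1 (by norm_num)
  have h2 := hj 2 (by norm_num)
  simp only [one_mul] at h1 h2
  have := myc_noAP a (by omega) d (by omega)
  have hle' : a + 2 * d ≤ 180 := by omega
  rcases this with h | h | h | h
  · omega
  · omega
  · omega
  · exact h ⟨h1, h2⟩
open Filter in
/-- compactness + Hales-Jewett: the vdW set is nonempty -/
theorem vdw_set_nonempty :
    {m : ℕ | 0 < m ∧ ∀ c : ℕ → ℕ, IsColoring 6 m c → ContainsAP 3 m c}.Nonempty := by
  by_contra hne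
  push_neg at hne
  rw [Set.eq_empty_iff_forall_notMem] at hne
  simp only [Set.mem_setOf_eq, not_and, not_forall] at hne
  have h : ∀ m : ℕ, ∃ c, IsColoring 6 (m + 1) c ∧ ¬ ContainsAP 3 (m + 1) c := fun m =>
    by simpa [exists_prop] using hne (m + 1) (Nat.succ_pos m)
  choose cc hcol hnap using h
  set U : Ultrafilter ℕ := hyperfilter ℕ with hU
  set F : ℕ → ℕ → Fin 7 := fun n m => ⟨min (cc m n) 6, by omega⟩ with hF
  have hv : ∀ n : ℕ, ∃ v : Fin 7, {m : ℕ | F n m = v} ∈ U := by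
    intro n
    obtain ⟨v, hv⟩ := Ultrafilter.eq_pure_of_finite (U.map (F n))
    refine ⟨v, ?_⟩
    have : {x : Fin 7 | x = v} ∈ U.map (F n) := by
      rw [hv]; exact Ultrafilter.mem_pure.2 rfl
    rwa [Ultrafilter.mem_map] at this
  choose v hv using hv
  obtain ⟨a, ha, b, k, hmono⟩ :=
    Combinatorics.exists_mono_homothetic_copy ({0, 1, 2} : Finset ℕ) (fun x => v (x + 1))
  have h0 := hmono 0 (by simp)
  have h1 := hmono 1 (by simp)
  have h2 := hmono 2 (by simp)
  simp only [smul_eq_mul, mul_zero, mul_one, zero_add] at h0 h1 h2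
  -- points b+1, b+1+a, b+1+2a
  have hbig : {m : ℕ | b + 2 * a ≤ m} ∈ U := by
    apply mem_hyperfilter_of_finite_compl
    exact (Set.finite_Iio (b + 2 * a)).subset (by intro x hx; simpa using Nat.lt_of_not_le hx)
  have hmem : ({m : ℕ | F (b + 1) m = v (b + 1)} ∩ {m | F (a + b + 1) m = v (a + b + 1)} ∩
      {m | F (a * 2 + b + 1) m = v (a * 2 + b + 1)} ∩ {m | b + 2 * a ≤ m}) ∈ U :=
    inter_mem (inter_mem (inter_mem (hv _) (hv _)) (hv _)) hbig
  obtain ⟨m, hm⟩ := Ultrafilter.nonempty_of_mem hmem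
  obtain ⟨⟨⟨hm0, hm1⟩, hm2⟩, hmle⟩ := hm
  simp only [Set.mem_setOf_eq] at hm0 hm1 hm2 hmle
  -- convert F equalities to cc equalities
  have key : ∀ p : ℕ, 1 ≤ p → p ≤ m + 1 → F p m = v p → cc m p = (v p : ℕ) := by
    intro p hp1 hp2 hFp
    have hb := hcol m p hp1 hp2
    have := congrArg Fin.val hFp
    simp only [hF] at this
    omega
  have e0 : cc m (b + 1) = (v (b + 1) : ℕ) := key _ (by omega) (by omega) hm0
  have e1 : cc m (a + b + 1) = (v (a + b + 1) : ℕ) := key _ (by omega) (by omega) hm1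
  have e2 : cc m (a * 2 + b + 1) = (v (a * 2 + b + 1) : ℕ) := key _ (by omega) (by omega) hm2
  apply hnap m
  refine ⟨b + 1, a, Nat.succ_pos b, ha, by omega, ?_⟩
  intro j hj
  interval_cases j
  · simp
  · show cc m (b + 1 + 1 * a) = cc m (b + 1)
    have : b + 1 + 1 * a = a + b + 1 := by ring
    rw [this, e0, e1, h0, h1]
  · show cc m (b + 1 + 2 * a) = cc m (b + 1)
    have : b + 1 + 2 * a = a * 2 + b + 1 := by ring
    rw [this, e0, e2, h0, h2]

theorem vdW_six_three_gt :
    vdW 6 3 > 180 ∧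
    ∃ c : ℕ → ℕ, IsColoring 6 180 c ∧ ¬ ContainsAP 3 180 c := by
  constructor
  · have hne := vdw_set_nonempty
    have hmem := Nat.sInf_mem hne
    obtain ⟨hpos, hall⟩ := hmem
    by_contra hle
    push_neg at hle
    have hM : sInf {m : ℕ | 0 < m ∧ ∀ c : ℕ → ℕ, IsColoring 6 m c → ContainsAP 3 m c} ≤ 180 :=
      hle
    set M := sInf {m : ℕ | 0 < m ∧ ∀ c : ℕ → ℕ, IsColoring 6 m c → ContainsAP 3 m c} with hMdef
    have hcol : IsColoring 6 M myc := fun i h1 h2 => myc_coloring i (by omega)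
    obtain ⟨a, d, ha, hd, hlem, hj⟩ := hall myc hcol
    exact myc_notContainsAP ⟨a, d, ha, hd, by omega, hj⟩
  · exact ⟨myc, myc_isColoring, myc_notContainsAP⟩
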